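/- In the proof that zero symmetric difference of equivalence-class multisets implies isomorphism, the key map is well-defined and a graph isomorphism: if N1 = (V1, E1) and N2 = (V2, E2) are S-DAGs with no internal equivalent pairs and Υ(N1) = Υ(N2), then the map α : V1 → V2 sending each node to the unique node of N2 equivalent to it is a bijection satisfying (u,v) ∈ E1 if and only if (α(u), α(v)) ∈ E2, and α sends each leaf of N1 to the leaf of N2 with the same label. -/

import Mathlib

open scoped Classical

/-- A finite directed acyclic graph whose leaves are (injectively) labeled in `S`. -/
structure LDag (S : Type) : Type 1 where
  V : Type
  fin : Fintype V
  adj : V → V → Prop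
  acyclic : WellFounded (fun a b => adj b a)
  lab : V → S
  labInj : ∀ u v : V, (∀ w, ¬ adj u w) → (∀ w, ¬ adj v w) → lab u = lab v → u = v

attribute [instance] LDag.fin

namespace LDag

variable {S : Type}

/-- A leaf is a node with no children. -/
def IsLeaf (N : LDag S) (v : N.V) : Prop := ∀ w, ¬ N.adj v w

/-- `v` is a descendant of `u` (every node is a descendant of itself). -/
def Desc (N : LDag S) (u v : N.V) : Prop := Relation.ReflTransGen N.adj u v

/-- The cluster of `u`: the set of labels of the leaves that are descendants of `u`. -/
def cluster (N : LDag S) (u : N.V) : Set S :=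
  {s | ∃ v, N.Desc u v ∧ N.IsLeaf v ∧ N.lab v = s}

/-- A tree node: a node with at most one parent. -/
def TreeNode (N : LDag S) (v : N.V) : Prop :=
  ∀ p q, N.adj p v → N.adj q v → p = q

/-- A root: a node with no parents. -/
def IsRoot (N : LDag S) (r : N.V) : Prop := ∀ u, ¬ N.adj u r

/-- Tree-child: every internal node has a child that is a tree node. -/
def TreeChild (N : LDag S) : Prop :=
  ∀ v, ¬ N.IsLeaf v → ∃ w, N.adj v w ∧ N.TreeNode w

/-- `PathN N u v k`: there is a directed path of length `k` from `u` to `v`. -/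
inductive PathN (N : LDag S) : N.V → N.V → ℕ → Prop
  | refl (v : N.V) : PathN N v v 0
  | cons {u v w : N.V} {k : ℕ} : N.adj u v → PathN N v w k → PathN N u w (k + 1)

/-- The height of a node: the largest length of a directed path from it to a leaf. -/
noncomputable def height (N : LDag S) (v : N.V) : ℕ :=
  sSup {k | ∃ s, N.IsLeaf s ∧ PathN N v s k}

/-- Node equivalence between (possibly equal) labeled DAGs, defined recursively:
two leaves with the same label are equivalent, and two internal nodes are equivalent
when their children can be matched into equivalent pairs. -/
noncomputable def equivTo (N1 N2 : LDag S) : N1.V → N2.V → Prop :=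
  N1.acyclic.fix (fun u ih v =>
    (N1.IsLeaf u ∧ N2.IsLeaf v ∧ N1.lab u = N2.lab v) ∨
    (¬ N1.IsLeaf u ∧ ¬ N2.IsLeaf v ∧
      ∃ f : {w // N1.adj u w} ≃ {w // N2.adj v w},
        ∀ w : {w // N1.adj u w}, ih w.1 w.2 (f w).1))

end LDag

/-- Pre-nested labels: finitely branching trees of labels (multisets are obtained
as a quotient by `NEq` below). -/
inductive PreNested (S : Type) : Type
  | leaf : S → PreNested S
  | node : List (PreNested S) → PreNested S

/-- Equality of pre-nested labels as nested multisets. -/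
inductive NEq {S : Type} : PreNested S → PreNested S → Prop
  | leaf (a : S) : NEq (.leaf a) (.leaf a)
  | node {l m : List (PreNested S)} : List.Forall₂ NEq l m → NEq (.node l) (.node m)
  | perm {l m : List (PreNested S)} : l.Perm m → NEq (.node l) (.node m)
  | symm {a b : PreNested S} : NEq a b → NEq b a
  | trans {a b c : PreNested S} : NEq a b → NEq b c → NEq a c

mutual
  theorem NEq.refl {S : Type} : ∀ a : PreNested S, NEq a a
    | .leaf s => .leaf s
    | .node l => .node (NEq.reflL l)
  theorem NEq.reflL {S : Type} : ∀ l : List (PreNested S), List.Forall₂ NEq l l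
    | [] => .nil
    | a :: l => .cons (NEq.refl a) (NEq.reflL l)
end

instance PreNested.setoid (S : Type) : Setoid (PreNested S) :=
  ⟨NEq, ⟨NEq.refl, fun h => h.symm, fun h1 h2 => h1.trans h2⟩⟩

/-- Nested multisets (of multisets of ...) of labels. -/
def Nested (S : Type) : Type := Quotient (PreNested.setoid S)

/-- `TaxaIn s p`: the taxon `s` occurs somewhere (at any nesting depth) in `p`. -/
inductive TaxaIn {S : Type} : S → PreNested S → Prop
  | leaf (s : S) : TaxaIn s (.leaf s)
  | node {s : S} {p : PreNested S} {l : List (PreNested S)} :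
      p ∈ l → TaxaIn s p → TaxaIn s (.node l)

mutual
  /-- Nesting depth of a pre-nested label: a singleton `{s}` has depth 1. -/
  def depthP {S : Type} : PreNested S → ℕ
    | .leaf _ => 1
    | .node l => depthL l + 1
  def depthL {S : Type} : List (PreNested S) → ℕ
    | [] => 0
    | p :: ps => max (depthP p) (depthL ps)
end

namespace LDag

variable {S : Type}

/-- The nested label of a node: the singleton of its label for a leaf, and the
multiset of the nested labels of its children otherwise. -/
noncomputable def nested (N : LDag S) : N.V → Nested S :=
  N.acyclic.fix (fun v ih =>
    if h : N.IsLeaf v then (⟦PreNested.leaf (N.lab v)⟧ : Nested S)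
    else ⟦PreNested.node (((Finset.univ.filter (fun w => N.adj v w)).attach.toList).map
        (fun w => (ih w.1 (Finset.mem_filter.mp w.2).2).out))⟧)

/-- `Υ(N)`: the multiset of equivalence classes (= nested labels) of the nodes of `N`,
with multiplicities. -/
noncomputable def UpsilonM (N : LDag S) : Multiset (Nested S) :=
  Finset.univ.val.map N.nested

/-- Label-preserving isomorphisms of labeled DAGs. -/
structure Iso (N1 N2 : LDag S) where
  toEquiv : N1.V ≃ N2.V
  adj_iff : ∀ u v : N1.V, N2.adj (toEquiv u) (toEquiv v) ↔ N1.adj u v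
  lab_leaf : ∀ v : N1.V, N1.IsLeaf v → N2.lab (toEquiv v) = N1.lab v

def IsIso (N1 N2 : LDag S) : Prop := Nonempty (Iso N1 N2)

theorem Iso.leaf_map {N1 N2 : LDag S} (e : Iso N1 N2) {v : N1.V} (h : N1.IsLeaf v) :
    N2.IsLeaf (e.toEquiv v) := by
  intro w hw
  have hw' : N2.adj (e.toEquiv v) (e.toEquiv (e.toEquiv.symm w)) := by simpa using hw
  exact h _ ((e.adj_iff _ _).mp hw')

def Iso.refl (N : LDag S) : Iso N N :=
  ⟨Equiv.refl _, fun _ _ => Iff.rfl, fun _ _ => rfl⟩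

def Iso.symm {N1 N2 : LDag S} (e : Iso N1 N2) : Iso N2 N1 where
  toEquiv := e.toEquiv.symm
  adj_iff u v := by rw [← e.adj_iff]; simp
  lab_leaf v hv := by
    have h1 : N1.IsLeaf (e.toEquiv.symm v) := by
      intro w hw
      have : N2.adj v (e.toEquiv w) := by
        have := (e.adj_iff (e.toEquiv.symm v) w).mpr hw
        simpa using this
      exact hv _ this
    have := e.lab_leaf _ h1
    simpa using this.symm

def Iso.trans {N1 N2 N3 : LDag S} (e : Iso N1 N2) (f : Iso N2 N3) : Iso N1 N3 where
  toEquiv := e.toEquiv.trans f.toEquiv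
  adj_iff u v := by
    simp only [Equiv.trans_apply]
    rw [f.adj_iff, e.adj_iff]
  lab_leaf v hv := by
    simp only [Equiv.trans_apply]
    rw [f.lab_leaf _ (e.leaf_map hv), e.lab_leaf _ hv]

instance isoSetoid (S : Type) : Setoid (LDag S) :=
  ⟨IsIso, ⟨fun N => ⟨Iso.refl N⟩, fun ⟨e⟩ => ⟨e.symm⟩, fun ⟨e⟩ ⟨f⟩ => ⟨e.trans f⟩⟩⟩

/-- Isomorphism classes of labeled DAGs. -/
def IsoClass (S : Type) : Type 1 := Quotient (isoSetoid S)

/-- The rooted subnetwork `N(u)` generated by a node `u`: the induced subgraph on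
the set of descendants of `u`. -/
noncomputable def subnet (N : LDag S) (u : N.V) : LDag S where
  V := {v // N.Desc u v}
  fin := Subtype.fintype _
  adj a b := N.adj a.1 b.1
  acyclic := by
    have h : (fun (a b : {v // N.Desc u v}) => N.adj b.1 a.1) =
        InvImage (fun a b => N.adj b a) Subtype.val := rfl
    rw [h]
    exact InvImage.wf _ N.acyclic
  lab v := N.lab v.1
  labInj := by
    intro a b ha hb hlab
    apply Subtype.ext
    refine N.labInj a.1 b.1 ?_ ?_ hlab
    · intro w hw
      exact ha ⟨w, a.2.trans (Relation.ReflTransGen.single hw)⟩ hw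
    · intro w hw
      exact hb ⟨w, b.2.trans (Relation.ReflTransGen.single hw)⟩ hw

/-- `Σ(N)`: the multiset of isomorphism classes of the rooted subnetworks generated
by the nodes of `N`, with multiplicities. -/
noncomputable def SigmaM (N : LDag S) : Multiset (IsoClass S) :=
  Finset.univ.val.map (fun u => (Quotient.mk (isoSetoid S) (N.subnet u) : IsoClass S))

/-- Nakhleh's dissimilarity `m(N1,N2) = |Υ(N1) △ Υ(N2)| / 2`. -/
noncomputable def mDist (N1 N2 : LDag S) : ℝ :=
  (((N1.UpsilonM - N2.UpsilonM) + (N2.UpsilonM - N1.UpsilonM)).card : ℝ) / 2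

/-- The distance `σ(N1,N2) = |Σ(N1) △ Σ(N2)| / 2`. -/
noncomputable def sigmaDist (N1 N2 : LDag S) : ℝ :=
  (((N1.SigmaM - N2.SigmaM) + (N2.SigmaM - N1.SigmaM)).card : ℝ) / 2

end LDag

/-- An `S`-DAG: a labeled DAG whose leaves are bijectively labeled by `S`. -/
structure SDag (S : Type) extends LDag S where
  surjLab : ∀ s : S, ∃ v, toLDag.IsLeaf v ∧ toLDag.lab v = s

/-- A phylogenetic network on `S`: a rooted `S`-DAG. -/
structure PhyloNetwork (S : Type) extends SDag S where
  rooted : ∃! r, toLDag.IsRoot r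

/-! Two nodes are equivalent exactly when their nested labels agree: nested labels are
inverted by their shape (leaf label, or multiset of the children's nested labels), and a
matching of children with equal nested labels is the same as an equality of these multisets
of labels. Without internal equivalent pairs, `nested` is injective on each network, so
`Υ(N1) = Υ(N2)` pairs the nodes bijectively. In the matching of children witnessing
`u ≡ α u`, each child `w` is then sent to `α w`, which turns the matching into the
adjacency correspondence. -/

theorem Multiset.map_univ_val_eq_map_univ_val_iff {α β γ : Type*} [Fintype α] [Fintype β]
    {f : α → γ} {g : β → γ} :
    Finset.univ.val.map f = Finset.univ.val.map g ↔ ∃ e : α ≃ β, ∀ a, g (e a) = f a := by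
  constructor
  · intro h
    have hfiber : ∀ c, Fintype.card {a // f a = c} = Fintype.card {b // g b = c} := by
      intro c
      have hc := congrArg (Multiset.count c) h
      rw [Multiset.count_map, Multiset.count_map] at hc
      simpa only [Fintype.card_subtype, Finset.card, Finset.filter_val, eq_comm] using hc
    exact ⟨Equiv.ofFiberEquiv fun c => Fintype.equivOfCardEq (hfiber c),
      Equiv.ofFiberEquiv_map _⟩
  · rintro ⟨e, he⟩
    rw [← Multiset.map_univ_val_equiv e, Multiset.map_map]
    exact Multiset.map_congr rfl fun a _ => (he a).symm

def PreNested.shape {S : Type} : PreNested S → S ⊕ Multiset (Nested S)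
  | .leaf s => .inl s
  | .node l => .inr ((l.map (⟦·⟧) : List (Nested S)) : Multiset (Nested S))

theorem NEq.shape_eq {S : Type} {a b : PreNested S} (h : NEq a b) : a.shape = b.shape := by
  -- `Quotient.sound` handles the `Forall₂` premise directly, so no list-level motive is needed.
  refine NEq.rec (motive_1 := fun a b _ => a.shape = b.shape)
    (motive_2 := fun _ _ _ => True) (fun _ => rfl) (fun {l m} hlm _ => ?_)
    (fun hlm => ?_) (fun _ ih => ih.symm) (fun _ _ ih1 ih2 => ih1.trans ih2)
    trivial (fun _ _ _ _ => trivial) h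
  · have hmk : l.map (⟦·⟧) = m.map (⟦·⟧ : PreNested S → Nested S) := by
      rw [← List.forall₂_eq_eq_eq, List.forall₂_map_left_iff, List.forall₂_map_right_iff]
      exact hlm.imp fun _ _ => Quotient.sound
    exact congrArg (fun l : List (Nested S) => Sum.inr (l : Multiset (Nested S))) hmk
  · simp only [PreNested.shape, Sum.inr.injEq, Multiset.coe_eq_coe]
    exact hlm.map _

namespace Nested

variable {S : Type}

def leaf (s : S) : Nested S := ⟦.leaf s⟧

noncomputable def node (M : Multiset (Nested S)) : Nested S :=
  Quotient.liftOn M (fun l => ⟦.node (l.map Quotient.out)⟧)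
    fun _ _ h => Quotient.sound (NEq.perm (h.map _))

def shape : Nested S → S ⊕ Multiset (Nested S) :=
  Quotient.lift PreNested.shape fun _ _ => NEq.shape_eq

theorem shape_leaf (s : S) : (leaf s).shape = .inl s := rfl

theorem shape_node (M : Multiset (Nested S)) : (node M).shape = .inr M := by
  induction M using Quotient.inductionOn with | h l => ?_
  show PreNested.shape (.node (l.map Quotient.out)) = .inr l
  simp only [PreNested.shape, Sum.inr.injEq, Multiset.coe_eq_coe]
  exact List.Perm.of_eq ((List.map_map ..).trans
    ((List.map_congr_left fun x _ => Quotient.out_eq x).trans l.map_id))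

theorem leaf_injective : Function.Injective (leaf : S → Nested S) := fun s t h => by
  simpa [shape_leaf] using congrArg shape h

theorem node_injective : Function.Injective (node : Multiset (Nested S) → Nested S) :=
  fun M M' h => by simpa [shape_node] using congrArg shape h

theorem leaf_ne_node (s : S) (M : Multiset (Nested S)) : leaf s ≠ node M := fun h => by
  simpa [shape_leaf, shape_node] using congrArg shape h

end Nested

namespace LDag

variable {S : Type}

theorem equivTo_iff (N1 N2 : LDag S) (u : N1.V) (v : N2.V) :
    N1.equivTo N2 u v ↔
      (N1.IsLeaf u ∧ N2.IsLeaf v ∧ N1.lab u = N2.lab v) ∨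
      (¬ N1.IsLeaf u ∧ ¬ N2.IsLeaf v ∧
        ∃ f : {w // N1.adj u w} ≃ {w // N2.adj v w}, ∀ w, N1.equivTo N2 w.1 (f w).1) := by
  rw [equivTo, WellFounded.fix_eq]

noncomputable def childNested (N : LDag S) (v : N.V) : Multiset (Nested S) :=
  Finset.univ.val.map fun w : {w // N.adj v w} => N.nested w

theorem nested_eq (N : LDag S) (v : N.V) :
    N.nested v = if N.IsLeaf v then .leaf (N.lab v) else .node (N.childNested v) := by
  rw [nested, WellFounded.fix_eq]
  by_cases hv : N.IsLeaf v <;> simp only [hv, ↓reduceDIte, ↓reduceIte]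
  · rfl
  · have hc : N.childNested v = ↑(((Finset.univ.filter (N.adj v)).attach.toList).map
        fun w => N.nested w.1) := by
      rw [← Multiset.map_coe, Finset.coe_toList, Finset.attach_eq_univ, childNested]
      exact Multiset.map_univ_val_eq_map_univ_val_iff.2
        ⟨Equiv.subtypeEquivRight fun _ => by simp, fun _ => rfl⟩
    rw [hc]
    exact congrArg (fun l => (⟦PreNested.node l⟧ : Nested S)) (List.map_map ..).symm

theorem equivTo_iff_nested_eq (N1 N2 : LDag S) (u : N1.V) (v : N2.V) :
    N1.equivTo N2 u v ↔ N1.nested u = N2.nested v := by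
  induction u using N1.acyclic.induction generalizing v with | _ u ih => ?_
  rw [equivTo_iff, nested_eq, nested_eq]
  by_cases hu : N1.IsLeaf u <;> by_cases hv : N2.IsLeaf v <;>
    simp only [hu, hv, ↓reduceIte, true_and, false_and, and_false, or_false, false_or, not_true,
      not_false_eq_true]
  · exact Nested.leaf_injective.eq_iff.symm
  · exact (iff_false_intro (Nested.leaf_ne_node _ _)).symm
  · exact (iff_false_intro (Nested.leaf_ne_node _ _).symm).symm
  · rw [Nested.node_injective.eq_iff, childNested, childNested,
      Multiset.map_univ_val_eq_map_univ_val_iff]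
    exact exists_congr fun f => forall_congr' fun w => (ih w.1 w.2 _).trans eq_comm

theorem nested_injective {N : LDag S} (h : ∀ u v, N.equivTo N u v → u = v) :
    Function.Injective N.nested :=
  fun u v huv => h u v ((equivTo_iff_nested_eq N N u v).2 huv)

theorem exists_nested_eq_of_upsilonM_eq {N1 N2 : LDag S} (h : N1.UpsilonM = N2.UpsilonM)
    (u : N1.V) : ∃ v, N2.nested v = N1.nested u := by
  have hu : N1.nested u ∈ N2.UpsilonM := h ▸ Multiset.mem_map_of_mem _ (Finset.mem_univ_val u)
  obtain ⟨v, -, hv⟩ := Multiset.mem_map.1 hu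
  exact ⟨v, hv⟩

theorem isLeaf_and_lab_eq_of_equivTo {N1 N2 : LDag S} {u : N1.V} {v : N2.V}
    (hu : N1.IsLeaf u) (h : N1.equivTo N2 u v) : N2.IsLeaf v ∧ N2.lab v = N1.lab u := by
  rcases (equivTo_iff N1 N2 u v).1 h with ⟨-, hv, hlab⟩ | ⟨hu', -⟩
  · exact ⟨hv, hlab.symm⟩
  · exact absurd hu hu'

theorem adj_iff_adj_of_equivTo_iff {N1 N2 : LDag S} {α : N1.V → N2.V}
    (hα : ∀ u v, N1.equivTo N2 u v ↔ α u = v) (hinj : Function.Injective α) (u v : N1.V) :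
    N1.adj u v ↔ N2.adj (α u) (α v) := by
  rcases (equivTo_iff N1 N2 u (α u)).1 ((hα u _).2 rfl) with ⟨hu, hαu, -⟩ | ⟨-, -, f, hf⟩
  · exact iff_of_false (hu v) (hαu _)
  have hfα : ∀ w, (f w).1 = α w.1 := fun w => ((hα _ _).1 (hf w)).symm
  constructor
  · intro huv
    simpa only [hfα] using (f ⟨v, huv⟩).2
  · intro huv
    obtain ⟨w, hw⟩ := f.surjective ⟨α v, huv⟩
    have hwv : w.1 = v := hinj ((hfα w).symm.trans (congrArg Subtype.val hw))
    exact hwv ▸ w.2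

end LDag

/-- If `N1` and `N2` have no internal equivalent pairs and `Υ(N1) = Υ(N2)`, then each
node of `N1` is equivalent to a unique node of `N2`, and the resulting map is a
label-preserving graph isomorphism. -/
theorem alpha_is_iso {S : Type} (N1 N2 : SDag S)
    (h1 : ∀ u v : N1.V, N1.toLDag.equivTo N1.toLDag u v → u = v)
    (h2 : ∀ u v : N2.V, N2.toLDag.equivTo N2.toLDag u v → u = v)
    (hU : N1.toLDag.UpsilonM = N2.toLDag.UpsilonM) :
    (∀ u : N1.V, ∃! v : N2.V, N1.toLDag.equivTo N2.toLDag u v) ∧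
    (∀ α : N1.V → N2.V, (∀ u, N1.toLDag.equivTo N2.toLDag u (α u)) →
      Function.Bijective α ∧
      (∀ u v : N1.V, N1.adj u v ↔ N2.adj (α u) (α v)) ∧
      (∀ v : N1.V, N1.toLDag.IsLeaf v →
        N2.toLDag.IsLeaf (α v) ∧ N2.lab (α v) = N1.lab v)) := by
  have hiff := LDag.equivTo_iff_nested_eq N1.toLDag N2.toLDag
  have inj1 := LDag.nested_injective h1
  have inj2 := LDag.nested_injective h2
  have hunique : ∀ u, ∃! v, N1.toLDag.equivTo N2.toLDag u v := fun u => by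
    obtain ⟨v, hv⟩ := LDag.exists_nested_eq_of_upsilonM_eq hU u
    exact ⟨v, (hiff u v).2 hv.symm, fun v' hv' => inj2 (((hiff u v').1 hv').symm.trans hv.symm)⟩
  refine ⟨hunique, fun α hα => ?_⟩
  have hgraph : ∀ u v, N1.toLDag.equivTo N2.toLDag u v ↔ α u = v :=
    fun u v => ⟨fun h => (hunique u).unique (hα u) h, fun h => h ▸ hα u⟩
  have hnested : ∀ u, N2.toLDag.nested (α u) = N1.toLDag.nested u :=
    fun u => ((hiff u (α u)).1 (hα u)).symm
  have hinj : Function.Injective α := fun u u' h => inj1 (by rw [← hnested, h, hnested])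
  have hsurj : Function.Surjective α := fun v => by
    obtain ⟨u, hu⟩ := LDag.exists_nested_eq_of_upsilonM_eq hU.symm v
    exact ⟨u, (hgraph u v).1 ((hiff u v).2 hu)⟩
  exact ⟨⟨hinj, hsurj⟩, LDag.adj_iff_adj_of_equivTo_iff hgraph hinj,
    fun v hv => LDag.isLeaf_and_lab_eq_of_equivTo hv (hα v)⟩
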